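/- arXiv:2309.07787 — 3 statements merged into one kernel-verified Lean document; each statement's English description precedes it below -/
import Mathlib

section
/- Closed-form optimal schedule with cut-offs for power costs (Theorem A.1, case r > 0). Let N ∈ ℕ, δ̄ > 0, 0 < m < 1 < M, r > 0, and let a, b ∈ ℝ^N have strictly positive entries. Consider the master problem: minimize ∑_{k=0}^{N−1} a_k δ_k over δ with m·δ̄ ≤ δ_k ≤ M·δ̄ for every k, subject to ∑_{k=0}^{N−1} b_k δ_k^{−r} = (∑_{k=0}^{N−1} b_k)·δ̄^{−r}. Assume the non-degeneracy condition: for no subset S ⊆ {0,…,N−1} does (M·δ̄)^{−r}·∑_{k∈S} b_k + (m·δ̄)^{−r}·∑_{k∉S} b_k = (∑_{k=0}^{N−1} b_k)·δ̄^{−r}. Then there exist integers N⊕, N⊖ ≥ 0 with N⊕ + N⊖ ≤ N−1 and a bijection ρ of {0,…,N−1} with ρ(k₁) < ρ(k₂) implying b_{k₁}/a_{k₁} ≥ b_{k₂}/a_{k₂}, such that, writing ⊕ = {k : ρ(k) < N⊕}, ⊖ = {k : ρ(k) > N−1−N⊖}, T = {k : N⊕ ≤ ρ(k) ≤ N−1−N⊖},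 and λ̂ = δ̄ · [ ( (∑_{k=0}^{N−1} b_k) − M^{−r}·∑_{k∈⊕} b_k − m^{−r}·∑_{k∈⊖} b_k ) / ∑_{k∈T} (a_k^r b_k)^{1/(r+1)} ]^{−1/r}, the vector δ* given by δ*_k = M·δ̄ for k ∈ ⊕, δ*_k = λ̂·(b_k/a_k)^{1/(r+1)} for k ∈ T, and δ*_k = m·δ̄ for k ∈ ⊖, is an optimal solution of the master problem, with λ̂ > 0. -/
/-!
For a multiplier `μ > 0` the function `δ ↦ a_k δ + μ b_k δ^(-r)` is convex on `(0, ∞)` with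
stationary point `λ ν_k^(1/(r+1))`, where `λ^(r+1) = r μ`; hence on `[m δ̄, M δ̄]` it is minimised
by that point clipped to the interval. The budget of the clipped schedule depends continuously on
`λ` and runs from `(∑ b) (m δ̄)^(-r)` down to `(∑ b) (M δ̄)^(-r)`, so some `λ` meets the budget
exactly, and summing the pointwise minimisations shows that this schedule is optimal. The
coordinates clipped at `M δ̄` carry the largest `ν_k` and those clipped at `m δ̄` the smallest, so
they form the first and last blocks of a descending ranking; non-degeneracy forces the middle
block to be non-empty, and solving the budget equation for `λ` gives its closed form.
-/

open Finset Real

lemma one_add_le_rpow_neg_add_mul {r u : ℝ} (hr : 0 < r) (hu : 0 < u) :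
    1 + r ≤ u ^ (-r) + r * u := by
  have hr1 : 0 < r + 1 := by linarith
  have amgm := geom_mean_le_arith_mean2_weighted (w₁ := 1 / (r + 1)) (w₂ := r / (r + 1))
    (p₁ := u ^ (-r)) (p₂ := u) (by positivity) (by positivity) (by positivity) hu.le
    (by field_simp; ring)
  have hgeom : (u ^ (-r)) ^ (1 / (r + 1)) * u ^ (r / (r + 1)) = 1 := by
    rw [← rpow_mul hu.le, ← rpow_add hu, show -r * (1 / (r + 1)) + r / (r + 1) = 0 by ring,
      rpow_zero]
  rw [hgeom] at amgm
  have := mul_le_mul_of_nonneg_left amgm hr1.le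
  field_simp at this
  linarith

lemma rpow_neg_tangent_le {r s t : ℝ} (hr : 0 < r) (hs : 0 < s) (ht : 0 < t) :
    s ^ (-r) - r * s ^ (-(r + 1)) * (t - s) ≤ t ^ (-r) := by
  have bern := mul_le_mul_of_nonneg_right (one_add_le_rpow_neg_add_mul hr (div_pos ht hs))
    (rpow_pos_of_pos hs (-r)).le
  have hsplit : s ^ (-(r + 1)) * s = s ^ (-r) := by
    rw [← rpow_add_one hs.ne']; ring_nf
  rw [div_rpow ht.le hs.le, add_mul (t ^ (-r) / s ^ (-r)),
    div_mul_cancel₀ _ (rpow_pos_of_pos hs _).ne'] at bern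
  have : r * (t / s) * s ^ (-r) = r * s ^ (-(r + 1)) * t := by
    rw [← hsplit]; field_simp
  nlinarith

lemma isMinOn_mul_add_mul_rpow_neg_clip {r B x lo hi : ℝ} (hr : 0 < r) (hB : 0 ≤ B)
    (hx : 0 < x) (hlo : 0 < lo) (hlohi : lo ≤ hi) :
    IsMinOn (fun t => r * B * x ^ (-(r + 1)) * t + B * t ^ (-r)) (Set.Icc lo hi)
      (max lo (min hi x)) := by
  rw [isMinOn_iff]
  intro t ht
  set s := max lo (min hi x)
  have hs : 0 < s := hlo.trans_le (le_max_left _ _)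
  have tangent := mul_le_mul_of_nonneg_left (rpow_neg_tangent_le hr hs (hlo.trans_le ht.1)) hB
  have hexp : -(r + 1) ≤ 0 := by linarith
  -- By the tangent inequality at `s`, the objective grows from `s` to `t` by at least
  -- `r B (x^(-(r+1)) - s^(-(r+1))) (t - s)`.
  have sign : 0 ≤ (x ^ (-(r + 1)) - s ^ (-(r + 1))) * (t - s) := by
    rcases lt_or_ge hi x with hhi | hhi
    · have hs' : s = hi := by simp [s, hhi.le, hlohi]
      rw [hs']
      exact mul_nonneg_of_nonpos_of_nonpos
        (sub_nonpos.2 (rpow_le_rpow_of_nonpos (hlo.trans_le hlohi) hhi.le hexp))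
        (sub_nonpos.2 ht.2)
    rcases lt_or_ge x lo with hxlo | hxlo
    · have hs' : s = lo := by simp [s, hhi, hxlo.le]
      rw [hs']
      exact mul_nonneg (sub_nonneg.2 (rpow_le_rpow_of_nonpos hx hxlo.le hexp))
        (sub_nonneg.2 ht.1)
    · have hs' : s = x := by simp [s, hhi, hxlo]
      simp [hs']
  nlinarith [mul_nonneg (mul_nonneg hr.le hB) sign]

lemma rpow_one_div_add_one_rpow_neg_add_one {r a b : ℝ} (hr : r + 1 ≠ 0) (ha : 0 < a) (hb : 0 < b) :
    ((b / a) ^ (1 / (r + 1))) ^ (-(r + 1)) = a / b := by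
  rw [← rpow_mul (div_pos hb ha).le, show 1 / (r + 1) * -(r + 1) = -1 by field_simp,
    rpow_neg_one, inv_div]

lemma mul_rpow_one_div_add_one_rpow_neg {r a b : ℝ} (hr : r + 1 ≠ 0) (ha : 0 < a) (hb : 0 < b) :
    b * ((b / a) ^ (1 / (r + 1))) ^ (-r) = (a ^ r * b) ^ (1 / (r + 1)) := by
  have hν : 0 < b / a := div_pos hb ha
  have har : 0 < a ^ r := rpow_pos_of_pos ha r
  apply log_injOn_pos (Set.mem_Ioi.2 (by positivity)) (Set.mem_Ioi.2 (by positivity))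
  rw [log_mul hb.ne' (by positivity), log_rpow (by positivity), log_rpow hν,
    log_rpow (by positivity), log_mul har.ne' hb.ne', log_rpow ha, log_div hb.ne' ha.ne']
  field_simp
  ring

lemma eq_mul_div_rpow_neg_inv {r d l E W : ℝ} (hr : r ≠ 0) (hd : 0 < d) (hl : 0 < l) (hW : 0 < W)
    (h : d ^ (-r) * E = l ^ (-r) * W) : l = d * (E / W) ^ (-(1 / r)) := by
  have hEW : E / W = (l / d) ^ (-r) := by
    rw [div_rpow hl.le hd.le, div_eq_div_iff hW.ne' (rpow_pos_of_pos hd _).ne']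
    linear_combination h
  rw [hEW, ← rpow_mul (div_pos hl hd).le, show -r * -(1 / r) = 1 by field_simp, rpow_one]
  field_simp

section Schedule

variable {ι : Type*}

/-- `λ ν_k ^ (1/(r+1))` with `ν_k = b_k / a_k`: the stationary point of the Lagrangian
`a_k δ + μ b_k δ^(-r)` when the box constraints are ignored. -/
noncomputable def freeSchedule (r l : ℝ) (a b : ι → ℝ) (k : ι) : ℝ :=
  l * (b k / a k) ^ (1 / (r + 1))

noncomputable def clipSchedule (lo hi r l : ℝ) (a b : ι → ℝ) (k : ι) : ℝ :=
  max lo (min hi (freeSchedule r l a b k))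

variable {lo hi r l : ℝ} {a b : ι → ℝ}

lemma freeSchedule_pos (hl : 0 < l) (ha : ∀ k, 0 < a k) (hb : ∀ k, 0 < b k) (k : ι) :
    0 < freeSchedule r l a b k :=
  mul_pos hl (rpow_pos_of_pos (div_pos (hb k) (ha k)) _)

lemma clipSchedule_mem_Icc (hlohi : lo ≤ hi) (k : ι) :
    clipSchedule lo hi r l a b k ∈ Set.Icc lo hi :=
  ⟨le_max_left _ _, max_le hlohi (min_le_left _ _)⟩

lemma clipSchedule_of_lt (hlohi : lo ≤ hi) {k : ι} (h : hi < freeSchedule r l a b k) :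
    clipSchedule lo hi r l a b k = hi := by
  simp [clipSchedule, h.le, hlohi]

lemma clipSchedule_of_lt_lo {k : ι} (h : freeSchedule r l a b k < lo) :
    clipSchedule lo hi r l a b k = lo :=
  max_eq_left ((min_le_right _ _).trans h.le)

lemma clipSchedule_of_mem_Icc {k : ι} (h : freeSchedule r l a b k ∈ Set.Icc lo hi) :
    clipSchedule lo hi r l a b k = freeSchedule r l a b k := by
  simp [clipSchedule, h.1, h.2]

variable [Fintype ι]

lemma continuous_sum_mul_clipSchedule_rpow_neg (hlo : 0 < lo) :
    Continuous fun l => ∑ k, b k * clipSchedule lo hi r l a b k ^ (-r) := by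
  refine continuous_finsetSum _ fun k _ => continuous_const.mul ?_
  refine Continuous.rpow_const ?_ fun l => Or.inl (hlo.trans_le (le_max_left _ _)).ne'
  unfold clipSchedule freeSchedule
  fun_prop

lemma exists_clipSchedule_budget_eq {C : ℝ} (hlo : 0 < lo) (hlohi : lo ≤ hi)
    (ha : ∀ k, 0 < a k) (hb : ∀ k, 0 < b k)
    (hC : C ∈ Set.Icc ((∑ k, b k) * hi ^ (-r)) ((∑ k, b k) * lo ^ (-r))) :
    ∃ l > 0, ∑ k, b k * clipSchedule lo hi r l a b k ^ (-r) = C := by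
  set c : ι → ℝ := fun k => (b k / a k) ^ (1 / (r + 1))
  have hc : ∀ k, 0 < c k := fun k => rpow_pos_of_pos (div_pos (hb k) (ha k)) _
  have hc_le : ∀ k, c k ≤ ∑ j, c j := fun k =>
    single_le_sum (fun j _ => (hc j).le) (mem_univ k)
  have hc_inv_le : ∀ k, (c k)⁻¹ ≤ ∑ j, (c j)⁻¹ := fun k =>
    single_le_sum (fun j _ => (inv_pos.2 (hc j)).le) (mem_univ k)
  set l₁ := lo / (1 + ∑ k, c k)
  set l₂ := hi * (1 + ∑ k, (c k)⁻¹)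
  have hsum_c : 0 ≤ ∑ k, c k := sum_nonneg fun k _ => (hc k).le
  have hsum_inv : 0 ≤ ∑ k, (c k)⁻¹ := sum_nonneg fun k _ => (inv_pos.2 (hc k)).le
  have hl₁ : 0 < l₁ := div_pos hlo (by linarith)
  have hl₂ : 0 < l₂ := mul_pos (hlo.trans_le hlohi) (by linarith)
  have at_l₁ : ∀ k, clipSchedule lo hi r l₁ a b k = lo := fun k => by
    refine clipSchedule_of_lt_lo ?_
    rw [freeSchedule, div_mul_eq_mul_div, div_lt_iff₀ (by linarith)]
    exact mul_lt_mul_of_pos_left (by linarith [hc_le k]) hlo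
  have at_l₂ : ∀ k, clipSchedule lo hi r l₂ a b k = hi := fun k => by
    refine clipSchedule_of_lt hlohi ?_
    have : 1 < (1 + ∑ j, (c j)⁻¹) * c k := by
      nlinarith [hc k, hc_inv_le k, mul_inv_cancel₀ (hc k).ne']
    rw [freeSchedule, mul_assoc]
    exact lt_mul_of_one_lt_right (hlo.trans_le hlohi) this
  have hC' : C ∈ Set.uIcc (∑ k, b k * clipSchedule lo hi r l₁ a b k ^ (-r))
      (∑ k, b k * clipSchedule lo hi r l₂ a b k ^ (-r)) :=
    Set.mem_uIcc.2 (Or.inr (by simpa [at_l₁, at_l₂, ← sum_mul] using hC))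
  obtain ⟨l, hl, hGl⟩ :=
    intermediate_value_uIcc (continuous_sum_mul_clipSchedule_rpow_neg hlo).continuousOn hC'
  refine ⟨l, ?_, hGl⟩
  rcases Set.mem_uIcc.1 hl with h | h
  · exact hl₁.trans_le h.1
  · exact hl₂.trans_le h.1

lemma sum_mul_clipSchedule_le (hr : 0 < r) (hl : 0 < l) (hlo : 0 < lo) (hlohi : lo ≤ hi)
    (ha : ∀ k, 0 < a k) (hb : ∀ k, 0 < b k) {δ : ι → ℝ} (hδ : ∀ k, δ k ∈ Set.Icc lo hi)
    (hbudget : ∑ k, b k * δ k ^ (-r) = ∑ k, b k * clipSchedule lo hi r l a b k ^ (-r)) :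
    ∑ k, a k * clipSchedule lo hi r l a b k ≤ ∑ k, a k * δ k := by
  set μ := l ^ (r + 1) / r
  have hμ : 0 < μ := div_pos (rpow_pos_of_pos hl _) hr
  have hslope : ∀ k, r * (μ * b k) * freeSchedule r l a b k ^ (-(r + 1)) = a k := fun k => by
    have hll : l ^ (r + 1) * l ^ (-(r + 1)) = 1 := by
      rw [← rpow_add hl, add_neg_cancel, rpow_zero]
    rw [freeSchedule, mul_rpow hl.le (rpow_pos_of_pos (div_pos (hb k) (ha k)) _).le,
      rpow_one_div_add_one_rpow_neg_add_one (by linarith) (ha k) (hb k)]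
    have hbk := (hb k).ne'
    simp only [μ]
    field_simp
    linear_combination a k * hll
  have hpoint : ∀ k, a k * clipSchedule lo hi r l a b k
      + μ * (b k * clipSchedule lo hi r l a b k ^ (-r))
      ≤ a k * δ k + μ * (b k * δ k ^ (-r)) := fun k => by
    have hmin := isMinOn_iff.1 (isMinOn_mul_add_mul_rpow_neg_clip hr
      (mul_pos hμ (hb k)).le (freeSchedule_pos (r := r) hl ha hb k) hlo hlohi) (δ k) (hδ k)
    rw [hslope k] at hmin
    rw [clipSchedule]
    linarith
  have hsum := sum_le_sum fun k (_ : k ∈ univ) => hpoint k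
  rw [sum_add_distrib, sum_add_distrib, ← mul_sum, ← mul_sum, hbudget] at hsum
  linarith

lemma sum_mul_clipSchedule_rpow_neg_eq (hr : r + 1 ≠ 0) (hl : 0 < l) (hlohi : lo ≤ hi)
    (ha : ∀ k, 0 < a k) (hb : ∀ k, 0 < b k) :
    ∑ k, b k * clipSchedule lo hi r l a b k ^ (-r) =
      hi ^ (-r) * ∑ k ∈ univ.filter (fun k => hi < freeSchedule r l a b k), b k
      + lo ^ (-r) * ∑ k ∈ univ.filter (fun k => freeSchedule r l a b k < lo), b k
      + l ^ (-r) * ∑ k ∈ univ.filter (fun k => freeSchedule r l a b k ∈ Set.Icc lo hi),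
          (a k ^ r * b k) ^ (1 / (r + 1)) := by
  simp only [mul_sum, sum_filter, ← sum_add_distrib]
  refine sum_congr rfl fun k _ => ?_
  by_cases hP : hi < freeSchedule r l a b k
  · have hQ : ¬ freeSchedule r l a b k < lo := by linarith
    have hT : freeSchedule r l a b k ∉ Set.Icc lo hi := fun h => by linarith [h.2]
    simp [hP, hQ, hT, clipSchedule_of_lt hlohi hP, mul_comm]
  by_cases hQ : freeSchedule r l a b k < lo
  · have hT : freeSchedule r l a b k ∉ Set.Icc lo hi := fun h => by linarith [h.1]
    simp [hP, hQ, hT, clipSchedule_of_lt_lo hQ, mul_comm]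
  · have hT : freeSchedule r l a b k ∈ Set.Icc lo hi := ⟨not_lt.1 hQ, not_lt.1 hP⟩
    simp only [hP, hQ, hT, if_true, if_false, mul_zero, zero_add, clipSchedule_of_mem_Icc hT]
    rw [freeSchedule, mul_rpow hl.le (rpow_pos_of_pos (div_pos (hb k) (ha k)) _).le,
      mul_left_comm, mul_rpow_one_div_add_one_rpow_neg hr (ha k) (hb k)]

lemma exists_freeSchedule_mem_Icc [DecidableEq ι] (hlohi : lo ≤ hi) {C : ℝ}
    (hnondeg : ¬ ∃ S : Finset ι, hi ^ (-r) * ∑ k ∈ S, b k + lo ^ (-r) * ∑ k ∈ Sᶜ, b k = C)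
    (hbudget : ∑ k, b k * clipSchedule lo hi r l a b k ^ (-r) = C) :
    ∃ k, freeSchedule r l a b k ∈ Set.Icc lo hi := by
  by_contra! hT
  refine hnondeg ⟨univ.filter fun k => hi < freeSchedule r l a b k, ?_⟩
  rw [← hbudget, ← sum_add_sum_compl (univ.filter fun k => hi < freeSchedule r l a b k),
    mul_sum, mul_sum]
  congr 1 <;> refine sum_congr rfl fun k hk => ?_
  · rw [clipSchedule_of_lt hlohi (mem_filter.1 hk).2, mul_comm]
  · have hP : freeSchedule r l a b k ≤ hi := by simpa using hk
    have hQ : freeSchedule r l a b k < lo := by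
      by_contra! hQ
      exact hT k ⟨hQ, hP⟩
    rw [clipSchedule_of_lt_lo hQ, mul_comm]

end Schedule

section Rank

variable {N : ℕ} {α : Type*} [LinearOrder α]

lemma exists_perm_antitone_rank (g : Fin N → α) :
    ∃ ρ : Equiv.Perm (Fin N), ∀ k₁ k₂, ρ k₁ < ρ k₂ → g k₂ ≤ g k₁ := by
  refine ⟨(Tuple.sort (OrderDual.toDual ∘ g))⁻¹, fun k₁ k₂ h => ?_⟩
  simpa using Tuple.monotone_sort (OrderDual.toDual ∘ g) h.le

variable {g : Fin N → α} {ρ : Equiv.Perm (Fin N)}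

lemma rank_lt_card_iff (hρ : ∀ k₁ k₂, ρ k₁ < ρ k₂ → g k₂ ≤ g k₁) {S : Finset (Fin N)}
    (hS : ∀ k ∈ S, ∀ j ∉ S, g j < g k) (k : Fin N) : (ρ k : ℕ) < #S ↔ k ∈ S := by
  have before : ∀ k ∈ S, ∀ j ∉ S, ρ k < ρ j := fun k hk j hj => by
    by_contra! h
    rcases h.lt_or_eq with h | h
    · exact (hS k hk j hj).not_ge (hρ j k h)
    · exact hj (ρ.injective h ▸ hk)
  constructor
  · intro hk
    by_contra hkS
    have hsub : S.image ρ ⊆ Iio (ρ k) := fun x hx => by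
      obtain ⟨j, hj, rfl⟩ := mem_image.1 hx
      exact mem_Iio.2 (before j hj k hkS)
    have := card_le_card hsub
    rw [card_image_of_injective S ρ.injective, Fin.card_Iio] at this
    omega
  · intro hk
    have hsub : Sᶜ.image ρ ⊆ Ioi (ρ k) := fun x hx => by
      obtain ⟨j, hj, rfl⟩ := mem_image.1 hx
      exact mem_Ioi.2 (before k hk j (mem_compl.1 hj))
    have := card_le_card hsub
    rw [card_image_of_injective _ ρ.injective, Fin.card_Ioi, card_compl, Fintype.card_fin] at this
    have := card_le_univ S
    have := (ρ k).isLt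
    have := card_pos.2 ⟨k, hk⟩
    simp only [Fintype.card_fin] at *
    omega

lemma rank_cutoff (hρ : ∀ k₁ k₂, ρ k₁ < ρ k₂ → g k₂ ≤ g k₁) {θ₁ θ₂ : α}
    (hT : ∃ k, g k ∈ Set.Icc θ₁ θ₂) :
    #{k | θ₂ < g k} + #{k | g k < θ₁} ≤ N - 1 ∧ ∀ k,
      ((ρ k : ℕ) < #{k | θ₂ < g k} ↔ θ₂ < g k) ∧
      (N - 1 - #{k | g k < θ₁} < (ρ k : ℕ) ↔ g k < θ₁) ∧
      (#{k | θ₂ < g k} ≤ (ρ k : ℕ) ∧ (ρ k : ℕ) ≤ N - 1 - #{k | g k < θ₁} ↔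
        g k ∈ Set.Icc θ₁ θ₂) := by
  obtain ⟨k₀, hk₀⟩ := hT
  have hP : ∀ k, (ρ k : ℕ) < #{k | θ₂ < g k} ↔ θ₂ < g k := fun k =>
    (rank_lt_card_iff hρ (fun k hk j hj => by
      simp only [mem_filter, mem_univ, true_and, not_lt] at hk hj
      exact hj.trans_lt hk) k).trans (by simp)
  have hR : ∀ k, (ρ k : ℕ) < #{k | θ₁ ≤ g k} ↔ θ₁ ≤ g k := fun k =>
    (rank_lt_card_iff hρ (fun k hk j hj => by
      simp only [mem_filter, mem_univ, true_and, not_le] at hk hj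
      exact hj.trans_le hk) k).trans (by simp)
  have hRQ : #{k | θ₁ ≤ g k} + #{k | g k < θ₁} = N := by
    simpa [not_le] using card_filter_add_card_filter_not (s := univ) (fun k => θ₁ ≤ g k)
  have hR₀ := (hR k₀).2 hk₀.1
  have hQ : ∀ k, N - 1 - #{k | g k < θ₁} < (ρ k : ℕ) ↔ g k < θ₁ := fun k => by
    have := (ρ k).isLt
    rw [← not_le (a := θ₁), ← hR k]
    omega
  have hk₀P := (hP k₀).not.2 hk₀.2.not_gt
  have hk₀Q := (hQ k₀).not.2 hk₀.1.not_gt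
  refine ⟨by omega, fun k => ⟨hP k, hQ k, ?_⟩⟩
  simp only [Set.mem_Icc, ← not_lt, ← hP k, ← hQ k]
  omega

end Rank

/-- Closed-form optimal schedule with cut-offs for power costs
(Theorem A.1, case r > 0). -/
theorem closed_form_power_schedule_cutoff
    (N : ℕ) (δbar m M r : ℝ)
    (hδbar : 0 < δbar) (hm : 0 < m) (hm1 : m < 1) (hM : 1 < M) (hr : 0 < r)
    (a b : Fin N → ℝ) (ha : ∀ k, 0 < a k) (hb : ∀ k, 0 < b k)
    (hnondeg : ¬ ∃ S : Finset (Fin N),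
      (M * δbar) ^ (-r) * ∑ k ∈ S, b k +
        (m * δbar) ^ (-r) * ∑ k ∈ Sᶜ, b k
      = (∑ k, b k) * δbar ^ (-r)) :
    ∃ Nplus Nminus : ℕ, Nplus + Nminus ≤ N - 1 ∧
    ∃ ρ : Equiv.Perm (Fin N),
      (∀ k₁ k₂ : Fin N, ρ k₁ < ρ k₂ → b k₂ / a k₂ ≤ b k₁ / a k₁) ∧
      ∃ lam : ℝ,
        lam = δbar *
          (((∑ k, b k)
            - M ^ (-r) * ∑ k ∈ univ.filter (fun k => (ρ k : ℕ) < Nplus), b k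
            - m ^ (-r) * ∑ k ∈ univ.filter (fun k => N - 1 - Nminus < (ρ k : ℕ)), b k) /
           ∑ k ∈ univ.filter
              (fun k => Nplus ≤ (ρ k : ℕ) ∧ (ρ k : ℕ) ≤ N - 1 - Nminus),
              (a k ^ r * b k) ^ (1 / (r + 1))) ^ (-(1 / r)) ∧
        0 < lam ∧
        ∃ δstar : Fin N → ℝ,
          (∀ k, (ρ k : ℕ) < Nplus → δstar k = M * δbar) ∧
          (∀ k, Nplus ≤ (ρ k : ℕ) → (ρ k : ℕ) ≤ N - 1 - Nminus →
            δstar k = lam * (b k / a k) ^ (1 / (r + 1))) ∧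
          (∀ k, N - 1 - Nminus < (ρ k : ℕ) → δstar k = m * δbar) ∧
          -- δstar is an optimal solution of the master problem
          (∀ k, m * δbar ≤ δstar k ∧ δstar k ≤ M * δbar) ∧
          (∑ k, b k * δstar k ^ (-r) = (∑ k, b k) * δbar ^ (-r)) ∧
          (∀ δ : Fin N → ℝ,
            (∀ k, m * δbar ≤ δ k ∧ δ k ≤ M * δbar) →
            (∑ k, b k * δ k ^ (-r) = (∑ k, b k) * δbar ^ (-r)) →
            ∑ k, a k * δstar k ≤ ∑ k, a k * δ k) := by
  have hlo : 0 < m * δbar := mul_pos hm hδbar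
  have hlohi : m * δbar ≤ M * δbar := by nlinarith
  have hB : 0 ≤ ∑ k, b k := sum_nonneg fun k _ => (hb k).le
  have hrange : (∑ k, b k) * δbar ^ (-r) ∈
      Set.Icc ((∑ k, b k) * (M * δbar) ^ (-r)) ((∑ k, b k) * (m * δbar) ^ (-r)) :=
    ⟨mul_le_mul_of_nonneg_left (rpow_le_rpow_of_nonpos hδbar (by nlinarith) (by linarith)) hB,
      mul_le_mul_of_nonneg_left (rpow_le_rpow_of_nonpos hlo (by nlinarith) (by linarith)) hB⟩
  obtain ⟨l, hl, hbudget⟩ := exists_clipSchedule_budget_eq (r := r) hlo hlohi ha hb hrange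
  obtain ⟨k₀, hk₀⟩ := exists_freeSchedule_mem_Icc hlohi hnondeg hbudget
  obtain ⟨ρ, hρ⟩ := exists_perm_antitone_rank fun k => b k / a k
  have hρx : ∀ k₁ k₂, ρ k₁ < ρ k₂ → freeSchedule r l a b k₂ ≤ freeSchedule r l a b k₁ :=
    fun k₁ k₂ h => mul_le_mul_of_nonneg_left
      (rpow_le_rpow (div_pos (hb k₂) (ha k₂)).le (hρ k₁ k₂ h) (by positivity)) hl.le
  obtain ⟨hcard, hzone⟩ := rank_cutoff hρx ⟨k₀, hk₀⟩
  refine ⟨_, _, hcard, ρ, hρ, l, ?_, hl, clipSchedule (m * δbar) (M * δbar) r l a b,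
    fun k hk => clipSchedule_of_lt hlohi ((hzone k).1.1 hk),
    fun k h₁ h₂ => clipSchedule_of_mem_Icc ((hzone k).2.2.1 ⟨h₁, h₂⟩),
    fun k hk => clipSchedule_of_lt_lo ((hzone k).2.1.1 hk),
    clipSchedule_mem_Icc hlohi, hbudget,
    fun δ hδ hδbudget =>
      sum_mul_clipSchedule_le hr hl hlo hlohi ha hb hδ (hδbudget.trans hbudget.symm)⟩
  rw [filter_congr fun k _ => (hzone k).1, filter_congr fun k _ => (hzone k).2.1,
    filter_congr fun k _ => (hzone k).2.2]
  refine eq_mul_div_rpow_neg_inv hr.ne' hδbar hl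
    (sum_pos (fun k _ => rpow_pos_of_pos (mul_pos (rpow_pos_of_pos (ha k) r) (hb k)) _)
      ⟨k₀, by simpa using hk₀⟩) ?_
  have hsplit := sum_mul_clipSchedule_rpow_neg_eq (r := r) (by linarith) hl hlohi ha hb
  rw [hbudget, mul_rpow (by linarith) hδbar.le, mul_rpow hm.le hδbar.le] at hsplit
  linear_combination hsplit
end

section
/- Closed-form optimal work allocation with cut-offs (Theorem A.2). Let N ∈ ℕ, r > 0, let a, b ∈ ℝ^N have strictly positive entries, and let 0 < ω_M < ω̄/N < ω_m. Consider the problem: minimize ∑_{k=0}^{N−1} a_k·(ω_k/b_k)^{−1/r} over vectors ω with ω_M ≤ ω_k ≤ ω_m for every k, subject to ∑_{k=0}^{N−1} ω_k = ω̄. Assume the non-degeneracy condition: there are no nonnegative integers p, q with p + q = N and p·ω_M + q·ω_m = ω̄. Then there exist integers N⊕, N⊖ ≥ 0 with N⊕ + N⊖ ≤ N−1 and a bijection ρ of {0,…,N−1} with ρ(k₁) < ρ(k₂) implying (a_{k₁}^r b_{k₁})^{−1} ≥ (a_{k₂}^r b_{k₂})^{−1}, such that, writing ⊕ = {k : ρ(k)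 < N⊕}, ⊖ = {k : ρ(k) > N−1−N⊖}, T = {k : N⊕ ≤ ρ(k) ≤ N−1−N⊖}, and λ̂ = (ω̄ − N⊕·ω_M − N⊖·ω_m) / ∑_{k∈T} (a_k^r b_k)^{1/(r+1)}, the vector ω* given by ω*_k = ω_M for k ∈ ⊕, ω*_k = λ̂·(a_k^r b_k)^{1/(r+1)} for k ∈ T, and ω*_k = ω_m for k ∈ ⊖, is an optimal solution of this problem, with λ̂ > 0. -/
/-!
Writing `s k = (a k ^ r * b k) ^ (1 / (r + 1))`, the cost is `∑ s k ^ (1 / r + 1) * ω k ^ (-1 / r)`,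
a separable convex function of `ω`. Its KKT point is the clamped allocation
`ω k = max ωM (min ωm (t * s k))`, with `t > 0` chosen by the intermediate value theorem so that
the budget `ωbar` is met. Coordinatewise, with `p = 1 / r`, the tangent inequality of
`x ↦ x ^ (-p)` bounds the cost difference by the multiplier `p * t ^ (-(p + 1))` (the marginal
cost at the unconstrained optimum `t * s k`, the same for every `k`) times the change of `ω k`;
on a cut-off coordinate the true marginal cost only differs from it in the direction in which no
feasible change can gain.
Summing, the multiplier terms cancel because both allocations spend the whole budget.

Coordinates are cut off below exactly where `t * s k < ωM` and above exactly where
`ωm < t * s k`, so ranking by `s` (that is, by decreasing `(a k ^ r * b k)⁻¹`) makes the three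
regions consecutive blocks of ranks. Non-degeneracy keeps the middle block non-empty, so `λ̂ = t`
is the stated quotient.
-/

open Finset

theorem rpow_neg_sub_rpow_neg_le {p x y : ℝ} (hp : 0 < p) (hx : 0 < x) (hy : 0 < y) :
    x ^ (-p) - y ^ (-p) ≤ p * x ^ (-(p + 1)) * (y - x) := by
  -- weighted AM-GM for `y ^ (-p)` and `x ^ (-(p + 1)) * y`, whose geometric mean is `x ^ (-p)`
  have hamgm := Real.geom_mean_le_arith_mean2_weighted (w₁ := 1 / (1 + p)) (w₂ := p / (1 + p))
    (p₁ := y ^ (-p)) (p₂ := x ^ (-(p + 1)) * y)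
    (by positivity) (by positivity) (by positivity) (by positivity) (by field_simp)
  have hgm : (y ^ (-p)) ^ (1 / (1 + p)) * (x ^ (-(p + 1)) * y) ^ (p / (1 + p)) = x ^ (-p) := by
    rw [← Real.rpow_mul hy.le, Real.mul_rpow (by positivity) hy.le, ← Real.rpow_mul hx.le,
      show -(p + 1) * (p / (1 + p)) = -p by field_simp; ring, mul_left_comm,
      ← Real.rpow_add hy, show -p * (1 / (1 + p)) + p / (1 + p) = 0 by field_simp; ring,
      Real.rpow_zero, mul_one]
  have hx' : x ^ (-p) = x ^ (-(p + 1)) * x := by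
    rw [show -p = -(p + 1) + 1 by ring, Real.rpow_add hx, Real.rpow_one]
  rw [hgm, hx', div_mul_eq_mul_div, div_mul_eq_mul_div, ← add_div,
    le_div_iff₀ (by linarith)] at hamgm
  rw [hx']
  linarith

theorem rpow_neg_clamp_sub_mul_sub_clamp_nonpos {q u lo hi y : ℝ} (hq : 0 ≤ q) (hu : 0 < u)
    (hlo : 0 < lo) (hy : y ∈ Set.Icc lo hi) :
    ((max lo (min hi u)) ^ (-q) - u ^ (-q)) * (y - max lo (min hi u)) ≤ 0 := by
  obtain ⟨hly, hyh⟩ := hy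
  rcases lt_or_ge u lo with hul | hlu
  · rw [min_eq_right (hul.le.trans (hly.trans hyh)), max_eq_left hul.le]
    exact mul_nonpos_of_nonpos_of_nonneg
      (sub_nonpos.2 (Real.rpow_le_rpow_of_nonpos hu hul.le (neg_nonpos.2 hq))) (sub_nonneg.2 hly)
  rcases le_or_gt u hi with huh | hhu
  · simp [min_eq_right huh, max_eq_right hlu]
  · rw [min_eq_left hhu.le, max_eq_right (hly.trans hyh)]
    have hhi : 0 < hi := hlo.trans_le (hly.trans hyh)
    exact mul_nonpos_of_nonneg_of_nonpos
      (sub_nonneg.2 (Real.rpow_le_rpow_of_nonpos hhi hhu.le (neg_nonpos.2 hq))) (sub_nonpos.2 hyh)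

theorem mul_rpow_neg_clamp_sub_le {p s t lo hi y : ℝ} (hp : 0 < p) (hs : 0 < s) (ht : 0 < t)
    (hlo : 0 < lo) (hy : y ∈ Set.Icc lo hi) :
    s ^ (p + 1) * (max lo (min hi (t * s))) ^ (-p) - s ^ (p + 1) * y ^ (-p) ≤
      p * t ^ (-(p + 1)) * (y - max lo (min hi (t * s))) := by
  set x := max lo (min hi (t * s))
  have hx : 0 < x := hlo.trans_le (le_max_left _ _)
  have hts : s ^ (p + 1) * (t * s) ^ (-(p + 1)) = t ^ (-(p + 1)) := by
    rw [Real.mul_rpow ht.le hs.le, Real.rpow_neg hs.le, mul_left_comm,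
      mul_inv_cancel₀ (by positivity), mul_one]
  have hclamp :=
    rpow_neg_clamp_sub_mul_sub_clamp_nonpos (q := p + 1) (by linarith) (mul_pos ht hs) hlo hy
  calc s ^ (p + 1) * x ^ (-p) - s ^ (p + 1) * y ^ (-p)
      = s ^ (p + 1) * (x ^ (-p) - y ^ (-p)) := by ring
    _ ≤ s ^ (p + 1) * (p * x ^ (-(p + 1)) * (y - x)) := by
      gcongr
      exact rpow_neg_sub_rpow_neg_le hp hx (hlo.trans_le hy.1)
    _ = p * t ^ (-(p + 1)) * (y - x) +
        p * s ^ (p + 1) * ((x ^ (-(p + 1)) - (t * s) ^ (-(p + 1))) * (y - x)) := by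
      rw [← hts]; ring
    _ ≤ p * t ^ (-(p + 1)) * (y - x) := by
      have : 0 ≤ p * s ^ (p + 1) := by positivity
      nlinarith

theorem sum_mul_rpow_neg_clamp_le {ι : Type*} [Fintype ι] {p t lo hi : ℝ} {s ω : ι → ℝ}
    (hp : 0 < p) (ht : 0 < t) (hlo : 0 < lo) (hs : ∀ k, 0 < s k) (hω : ∀ k, ω k ∈ Set.Icc lo hi)
    (hsum : ∑ k, ω k = ∑ k, max lo (min hi (t * s k))) :
    ∑ k, s k ^ (p + 1) * (max lo (min hi (t * s k))) ^ (-p) ≤ ∑ k, s k ^ (p + 1) * ω k ^ (-p) := by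
  have key := sum_le_sum fun k (_ : k ∈ univ) => mul_rpow_neg_clamp_sub_le hp (hs k) ht hlo (hω k)
  rw [sum_sub_distrib, ← mul_sum, sum_sub_distrib, hsum, sub_self, mul_zero] at key
  linarith

theorem mul_div_rpow_neg_one_div_eq {r a b x : ℝ} (hr : 0 < r) (ha : 0 < a) (hb : 0 < b)
    (hx : 0 ≤ x) :
    a * (x / b) ^ (-(1 / r)) = ((a ^ r * b) ^ (1 / (r + 1))) ^ (1 / r + 1) * x ^ (-(1 / r)) := by
  rw [← Real.rpow_mul (by positivity), show 1 / (r + 1) * (1 / r + 1) = 1 / r by field_simp; ring,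
    Real.mul_rpow (by positivity) hb.le, ← Real.rpow_mul ha.le, mul_one_div_cancel hr.ne',
    Real.rpow_one, Real.div_rpow hx hb.le, Real.rpow_neg hb.le, div_inv_eq_mul]
  ring

theorem exists_pos_sum_clamp_eq {ι : Type*} [Fintype ι] {s : ι → ℝ} (hs : ∀ k, 0 < s k)
    {lo hi W : ℝ} (hlo : 0 ≤ lo) (hWlo : Fintype.card ι * lo < W)
    (hWhi : W < Fintype.card ι * hi) :
    ∃ t > 0, ∑ k, max lo (min hi (t * s k)) = W := by
  set g : ℝ → ℝ := fun t => ∑ k, max lo (min hi (t * s k))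
  have hlohi : lo ≤ hi := by
    by_contra! h
    nlinarith [(Fintype.card ι).cast_nonneg (α := ℝ)]
  have hg0 : g 0 = Fintype.card ι * lo := by
    simp [g, min_eq_right (hlo.trans hlohi), max_eq_left hlo]
  -- at `L = ∑ hi / s k` every coordinate is cut off at `hi`
  set L := ∑ k, hi / s k
  have hL : 0 ≤ L := sum_nonneg fun k _ => div_nonneg (hlo.trans hlohi) (hs k).le
  have hgL : g L = Fintype.card ι * hi := by
    have hLs : ∀ k, hi ≤ L * s k := fun k => by
      rw [← div_le_iff₀ (hs k)]
      exact single_le_sum (fun j _ => div_nonneg (hlo.trans hlohi) (hs j).le) (mem_univ k)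
    simp [g, min_eq_left (hLs _), max_eq_right hlohi]
  have hg : Continuous g := by fun_prop
  obtain ⟨t, ⟨ht, -⟩, hgt⟩ := intermediate_value_Icc hL hg.continuousOn
    (show W ∈ Set.Icc (g 0) (g L) by rw [hg0, hgL]; exact ⟨hWlo.le, hWhi.le⟩)
  refine ⟨t, ht.lt_of_ne ?_, hgt⟩
  rintro rfl
  linarith

theorem sum_eq_sum_filter_lt_add_sum_filter_gt_add_sum_filter_Icc {ι M : Type*} [Fintype ι]
    [AddCommMonoid M] (f : ι → M) (u : ι → ℝ) {lo hi : ℝ} (h : lo ≤ hi) :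
    ∑ k, f k = ∑ k with u k < lo, f k + ∑ k with hi < u k, f k +
      ∑ k with lo ≤ u k ∧ u k ≤ hi, f k := by
  rw [← sum_filter_add_sum_filter_not univ (fun k => u k < lo),
    ← sum_filter_add_sum_filter_not (univ.filter fun k => ¬u k < lo) (fun k => hi < u k),
    filter_filter, filter_filter, add_assoc]
  congr 3
  · ext k
    simp only [mem_filter, mem_univ, true_and, not_lt]
    exact ⟨And.right, fun hk => ⟨h.trans hk.le, hk⟩⟩
  · ext k
    simp only [mem_filter, mem_univ, true_and, not_lt]

theorem sum_clamp_eq {ι : Type*} [Fintype ι] (u : ι → ℝ) {lo hi : ℝ} (h : lo ≤ hi) :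
    ∑ k, max lo (min hi (u k)) = #{k | u k < lo} * lo + #{k | hi < u k} * hi +
      ∑ k with lo ≤ u k ∧ u k ≤ hi, u k := by
  rw [sum_eq_sum_filter_lt_add_sum_filter_gt_add_sum_filter_Icc _ u h]
  congr 1
  congr 1
  · rw [sum_congr rfl fun k hk => ?_, sum_const, nsmul_eq_mul]
    have hk := (mem_filter.1 hk).2
    simp [hk.le, (hk.trans_le h).le]
  · rw [sum_congr rfl fun k hk => ?_, sum_const, nsmul_eq_mul]
    simp [(mem_filter.1 hk).2.le, h]
  · exact sum_congr rfl fun k hk => by simp [(mem_filter.1 hk).2]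

theorem card_filter_lt_add_card_filter_gt_add_card_filter_Icc {ι : Type*} [Fintype ι]
    (u : ι → ℝ) {lo hi : ℝ} (h : lo ≤ hi) :
    #{k | u k < lo} + #{k | hi < u k} + #{k | lo ≤ u k ∧ u k ≤ hi} = Fintype.card ι := by
  simpa only [sum_const, smul_eq_mul, mul_one, card_univ, eq_comm] using
    sum_eq_sum_filter_lt_add_sum_filter_gt_add_sum_filter_Icc (M := ℕ) (fun _ => 1) u h

theorem exists_pos_sum_clamp_eq_and_nonempty {ι : Type*} [Fintype ι] {s : ι → ℝ}
    (hs : ∀ k, 0 < s k) {lo hi W : ℝ} (hlo : 0 ≤ lo) (hWlo : Fintype.card ι * lo < W)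
    (hWhi : W < Fintype.card ι * hi)
    (hnondeg : ¬∃ p q : ℕ, p + q = Fintype.card ι ∧ (p : ℝ) * lo + (q : ℝ) * hi = W) :
    ∃ t > 0, ∑ k, max lo (min hi (t * s k)) = W ∧
      ({k | lo ≤ t * s k ∧ t * s k ≤ hi} : Finset ι).Nonempty := by
  obtain ⟨t, ht, hsum⟩ := exists_pos_sum_clamp_eq hs hlo hWlo hWhi
  have hlohi : lo ≤ hi := (lt_of_mul_lt_mul_left (hWlo.trans hWhi) (Nat.cast_nonneg _)).le
  refine ⟨t, ht, hsum, nonempty_iff_ne_empty.2 fun hT => hnondeg ?_⟩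
  refine ⟨#{k | t * s k < lo}, #{k | hi < t * s k}, ?_, ?_⟩
  · simpa [hT] using card_filter_lt_add_card_filter_gt_add_card_filter_Icc (t * s ·) hlohi
  · simpa [hT, hsum] using (sum_clamp_eq (t * s ·) hlohi).symm

theorem Tuple.apply_le_apply_of_sort_symm_le {n : ℕ} {α : Type*} [LinearOrder α] (f : Fin n → α)
    {j k : Fin n} (h : (Tuple.sort f).symm j ≤ (Tuple.sort f).symm k) : f j ≤ f k := by
  simpa using Tuple.monotone_sort f h

theorem rank_lt_card_filter_iff {N : ℕ} (ρ : Equiv.Perm (Fin N)) {P : Fin N → Prop}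
    [DecidablePred P] (hP : ∀ j k, ρ j ≤ ρ k → P k → P j) (k : Fin N) :
    (ρ k : ℕ) < #{j | P j} ↔ P k := by
  have hρk := (ρ k).isLt
  constructor
  · intro hk
    by_contra hPk
    have : #{j | P j} ≤ #(Iio (ρ k)) :=
      card_le_card_of_injOn ρ (fun j hj => mem_Iio.2 <| lt_of_not_ge fun hkj =>
        hPk (hP k j hkj (mem_filter.1 hj).2)) ρ.injective.injOn
    rw [Fin.card_Iio] at this
    omega
  · intro hPk
    have : #{j | ¬P j} ≤ #(Ioi (ρ k)) :=
      card_le_card_of_injOn ρ (fun j hj => mem_Ioi.2 <| lt_of_not_ge fun hjk =>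
        (mem_filter.1 hj).2 (hP j k hjk hPk)) ρ.injective.injOn
    have hcard := card_filter_add_card_filter_not (s := univ) (fun j => P j)
    rw [Fin.card_Ioi, card_univ, Fintype.card_fin] at *
    omega

theorem card_sub_card_filter_le_rank_iff {N : ℕ} (ρ : Equiv.Perm (Fin N)) {P : Fin N → Prop}
    [DecidablePred P] (hP : ∀ j k, ρ j ≤ ρ k → P j → P k) (k : Fin N) :
    N - #{j | P j} ≤ (ρ k : ℕ) ↔ P k := by
  have hrank := rank_lt_card_filter_iff ρ (P := fun j => ¬P j) (fun j k hjk => mt (hP j k hjk)) k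
  have hcard := card_filter_add_card_filter_not (s := univ) (fun j => P j)
  rw [card_univ, Fintype.card_fin] at hcard
  rw [← not_iff_not, not_le, ← hrank]
  omega

/-- Closed-form optimal work allocation with cut-offs (Theorem A.2). -/
theorem closed_form_work_allocation_cutoff
    (N : ℕ) (r ωM ωm ωbar : ℝ) (hr : 0 < r)
    (a b : Fin N → ℝ) (ha : ∀ k, 0 < a k) (hb : ∀ k, 0 < b k)
    (hωM : 0 < ωM) (h1 : ωM < ωbar / N) (h2 : ωbar / N < ωm)
    (hnondeg : ¬ ∃ p q : ℕ, p + q = N ∧ (p : ℝ) * ωM + (q : ℝ) * ωm = ωbar) :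
    ∃ Nplus Nminus : ℕ, Nplus + Nminus ≤ N - 1 ∧
    ∃ ρ : Equiv.Perm (Fin N),
      (∀ k₁ k₂ : Fin N, ρ k₁ < ρ k₂ →
        (a k₂ ^ r * b k₂)⁻¹ ≤ (a k₁ ^ r * b k₁)⁻¹) ∧
      ∃ lam : ℝ,
        lam = (ωbar - (Nplus : ℝ) * ωM - (Nminus : ℝ) * ωm) /
          ∑ k ∈ univ.filter
            (fun k => Nplus ≤ (ρ k : ℕ) ∧ (ρ k : ℕ) ≤ N - 1 - Nminus),
            (a k ^ r * b k) ^ (1 / (r + 1)) ∧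
        0 < lam ∧
        ∃ ωstar : Fin N → ℝ,
          (∀ k, (ρ k : ℕ) < Nplus → ωstar k = ωM) ∧
          (∀ k, Nplus ≤ (ρ k : ℕ) → (ρ k : ℕ) ≤ N - 1 - Nminus →
            ωstar k = lam * (a k ^ r * b k) ^ (1 / (r + 1))) ∧
          (∀ k, N - 1 - Nminus < (ρ k : ℕ) → ωstar k = ωm) ∧
          -- ωstar is an optimal solution of the work-controlled problem
          (∀ k, ωM ≤ ωstar k ∧ ωstar k ≤ ωm) ∧
          (∑ k, ωstar k = ωbar) ∧
          (∀ ω : Fin N → ℝ,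
            (∀ k, ωM ≤ ω k ∧ ω k ≤ ωm) →
            (∑ k, ω k = ωbar) →
            ∑ k, a k * (ωstar k / b k) ^ (-(1 / r)) ≤
              ∑ k, a k * (ω k / b k) ^ (-(1 / r))) := by
  classical
  have hNR : (0 : ℝ) < N := Nat.cast_pos.2 <| Nat.pos_of_ne_zero fun hN => by
    simp only [hN, Nat.cast_zero, div_zero] at h1; linarith
  have hMm : ωM ≤ ωm := (h1.trans h2).le
  set s : Fin N → ℝ := fun k => (a k ^ r * b k) ^ (1 / (r + 1))
  have hs : ∀ k, 0 < s k := fun k => by have := ha k; have := hb k; positivity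
  obtain ⟨t, ht, hsum, hT⟩ := exists_pos_sum_clamp_eq_and_nonempty hs hωM.le
    (by rwa [Fintype.card_fin, ← lt_div_iff₀' hNR]) (by rwa [Fintype.card_fin, ← div_lt_iff₀' hNR])
    (by rwa [Fintype.card_fin])
  set ωstar : Fin N → ℝ := fun k => max ωM (min ωm (t * s k))
  set Nplus := #{k | t * s k < ωM}
  set Nminus := #{k | ωm < t * s k}
  set T := univ.filter fun k => ωM ≤ t * s k ∧ t * s k ≤ ωm
  have hcard : Nplus + Nminus + #T = N := by
    simpa using card_filter_lt_add_card_filter_gt_add_card_filter_Icc (t * s ·) hMm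
  have hsplit : Nplus * ωM + Nminus * ωm + t * ∑ k ∈ T, s k = ωbar := by
    rw [← hsum, sum_clamp_eq (t * s ·) hMm, mul_sum]
  set ρ := (Tuple.sort s).symm
  have hsorted : ∀ j k, ρ j ≤ ρ k → t * s j ≤ t * s k := fun j k hjk =>
    mul_le_mul_of_nonneg_left (Tuple.apply_le_apply_of_sort_symm_le s hjk) ht.le
  have hplus : ∀ k, (ρ k : ℕ) < Nplus ↔ t * s k < ωM :=
    rank_lt_card_filter_iff ρ fun j k hjk => (hsorted j k hjk).trans_lt
  have hminus : ∀ k, N - Nminus ≤ (ρ k : ℕ) ↔ ωm < t * s k :=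
    card_sub_card_filter_le_rank_iff ρ fun j k hjk => (·.trans_le (hsorted j k hjk))
  have hTcard := hT.card_pos
  have hTrank : univ.filter (fun k => Nplus ≤ (ρ k : ℕ) ∧ (ρ k : ℕ) ≤ N - 1 - Nminus) = T := by
    ext k
    rw [mem_filter, mem_filter, ← not_lt, hplus, not_lt,
      show (ρ k : ℕ) ≤ N - 1 - Nminus ↔ ¬ N - Nminus ≤ ρ k by omega, hminus, not_lt]
  refine ⟨Nplus, Nminus, by omega, ρ, fun k₁ k₂ hlt => ?_, t, ?_, ht, ωstar, fun k hk => ?_,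
    fun k hk₁ hk₂ => ?_, fun k hk => ?_, fun k => ⟨le_max_left _ _, max_le hMm (min_le_left _ _)⟩,
    hsum, fun ω hω hωsum => ?_⟩
  · have hw : ∀ k, 0 < a k ^ r * b k := fun k => by have := ha k; have := hb k; positivity
    refine inv_anti₀ (hw k₁) ((Real.rpow_le_rpow_iff (z := 1 / (r + 1)) (hw k₁).le (hw k₂).le
      (by positivity)).1 (le_of_mul_le_mul_left (hsorted k₁ k₂ hlt.le) ht))
  · rw [hTrank, eq_div_iff (sum_pos (fun k _ => hs k) hT).ne']
    linarith
  · have hk := (hplus k).1 hk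
    simp [ωstar, hk.le, (hk.trans_le hMm).le]
  · have hk : k ∈ T := hTrank ▸ mem_filter.2 ⟨mem_univ k, hk₁, hk₂⟩
    obtain ⟨-, hlo, hhi⟩ := mem_filter.1 hk
    simp only [ωstar]
    rw [min_eq_right hhi, max_eq_right hlo]
  · have hk := (hminus k).1 (by omega)
    simp [ωstar, hk.le, hMm]
  · have hobj : ∀ v : Fin N → ℝ, (∀ k, ωM ≤ v k) → ∑ k, a k * (v k / b k) ^ (-(1 / r)) =
        ∑ k, s k ^ (1 / r + 1) * v k ^ (-(1 / r)) := fun v hv =>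
      sum_congr rfl fun k _ => mul_div_rpow_neg_one_div_eq hr (ha k) (hb k) (hωM.le.trans (hv k))
    rw [hobj ωstar fun k => le_max_left _ _, hobj ω fun k => (hω k).1]
    exact sum_mul_rpow_neg_clamp_le (one_div_pos.2 hr) ht hωM hs hω (hωsum.trans hsum.symm)
end

section
/- Recursion rule between interior entries of an optimal inexactness schedule (equation (3.15)). Let N ∈ ℕ, δ̄ > 0, 0 ≤ m < 1 < M, r > 0, and let a, b ∈ ℝ^N have strictly positive entries. Consider the master problem: minimize ∑_{k=0}^{N−1} a_k δ_k over δ with m·δ̄ ≤ δ_k ≤ M·δ̄ and δ_k > 0 for every k, subject to ∑_{k=0}^{N−1} b_k δ_k^{−r} = (∑_{k=0}^{N−1} b_k)·δ̄^{−r}. If δ* is an optimal solution and two indices k, k̂ ∈ {0,…,N−1} satisfy m·δ̄ < δ*_k < M·δ̄ and m·δ̄ < δ*_{k̂} < M·δ̄, then δ*_{k̂} = ( (b_{k̂}·a_k) / (a_{k̂}·b_k) )^{1/(r+1)} · δ*_k. -/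
/-!
Exchange budget between two interior entries `k ≠ l`: shift their costs `δ ^ (-r)` by `b l * t`
and `-b k * t`. This keeps the budget and, for small `t`, the box constraints, so optimality
makes `t = 0` a local minimum of the objective along the exchange. Its derivative there,
`(a l * b k * δ l ^ (r + 1) - a k * b l * δ k ^ (r + 1)) / r`, must vanish, which is the ratio
rule after taking `(r + 1)`-th roots.
-/

open Filter Topology Function

theorem Finset.sum_apply_update {ι α β : Type*} [Fintype ι] [DecidableEq ι] [AddCommGroup β]
    (f : ι → α → β) (δ : ι → α) (k : ι) (x : α) :
    ∑ j, f j (update δ k x j) = ∑ j, f j (δ j) + (f k x - f k (δ k)) := by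
  simp_rw [apply_update f]
  rw [sum_update_of_mem (mem_univ k), sum_eq_add_sum_sdiff_singleton_of_mem (mem_univ k)]
  abel

theorem Finset.sum_apply_update_update {ι α β : Type*} [Fintype ι] [DecidableEq ι]
    [AddCommGroup β] (f : ι → α → β) (δ : ι → α) {k l : ι} (hkl : k ≠ l) (x y : α) :
    ∑ j, f j (update (update δ l y) k x j) =
      ∑ j, f j (δ j) + (f k x - f k (δ k)) + (f l y - f l (δ l)) := by
  rw [sum_apply_update, sum_apply_update, update_of_ne hkl]
  abel

/-- The entry whose cost `δ ^ (-r)` is that of `x` shifted by `c * t`. -/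
noncomputable def costShift (r x c t : ℝ) : ℝ := (x ^ (-r) + c * t) ^ (-r)⁻¹

section costShift

variable {r x c t : ℝ}

theorem costShift_zero (hx : 0 ≤ x) (hr : r ≠ 0) : costShift r x c 0 = x := by
  rw [costShift, mul_zero, add_zero, Real.rpow_rpow_inv hx (neg_ne_zero.2 hr)]

theorem costShift_rpow_neg (ht : 0 ≤ x ^ (-r) + c * t) (hr : r ≠ 0) :
    costShift r x c t ^ (-r) = x ^ (-r) + c * t :=
  Real.rpow_inv_rpow ht (neg_ne_zero.2 hr)

theorem hasDerivAt_costShift (hx : 0 < x) (hr : r ≠ 0) :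
    HasDerivAt (costShift r x c) (-(c / r) * x ^ (r + 1)) 0 := by
  have hbase : HasDerivAt (fun t => x ^ (-r) + c * t) c 0 := by
    simpa using ((hasDerivAt_id (0 : ℝ)).const_mul c).const_add (x ^ (-r))
  convert hbase.rpow_const (p := (-r)⁻¹) (Or.inl (by simp; positivity)) using 1
  · rfl
  rw [mul_zero, add_zero, ← Real.rpow_mul hx.le]
  field_simp
  ring_nf

end costShift

section exchange

variable {ι : Type*} [Fintype ι] [DecidableEq ι] {I : Set ℝ} {a b δs : ι → ℝ} {r B : ℝ}
  {k l : ι}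

theorem isLocalMin_costExchange (hr : r ≠ 0) (hI : I ⊆ Set.Ioi 0) (hfeas : ∀ j, δs j ∈ I)
    (hbudget : ∑ j, b j * δs j ^ (-r) = B)
    (hopt : ∀ δ : ι → ℝ, (∀ j, δ j ∈ I) → ∑ j, b j * δ j ^ (-r) = B →
      ∑ j, a j * δs j ≤ ∑ j, a j * δ j)
    (hkl : k ≠ l) (hk : I ∈ 𝓝 (δs k)) (hl : I ∈ 𝓝 (δs l)) :
    IsLocalMin (fun t => a k * costShift r (δs k) (b l) t + a l * costShift r (δs l) (-b k) t)
      0 := by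
  have hpos : ∀ j, 0 < δs j := fun j => hI (hfeas j)
  have hnear (j : ι) (c : ℝ) (hj : I ∈ 𝓝 (δs j)) :
      ∀ᶠ t in 𝓝 0, costShift r (δs j) c t ∈ I ∧ 0 ≤ δs j ^ (-r) + c * t := by
    refine ((hasDerivAt_costShift (hpos j) hr).continuousAt.eventually_mem ?_).and ?_
    · rwa [costShift_zero (hpos j).le hr]
    · have hcont : Continuous fun t : ℝ => δs j ^ (-r) + c * t := by fun_prop
      filter_upwards [continuousAt_const.eventually_lt hcont.continuousAt
        (by simpa using Real.rpow_pos_of_pos (hpos j) (-r))] with t ht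
      exact ht.le
  filter_upwards [hnear k (b l) hk, hnear l (-b k) hl] with t ⟨hkI, hkt⟩ ⟨hlI, hlt⟩
  set δ := update (update δs l (costShift r (δs l) (-b k) t)) k (costShift r (δs k) (b l) t)
  have hδfeas : ∀ j, δ j ∈ I := by
    intro j
    rcases eq_or_ne j k with rfl | hjk
    · simpa [δ] using hkI
    rcases eq_or_ne j l with rfl | hjl
    · simpa [δ, update_of_ne hjk] using hlI
    simpa [δ, update_of_ne hjk, update_of_ne hjl] using hfeas j
  have hδbudget : ∑ j, b j * δ j ^ (-r) = B := by
    rw [Finset.sum_apply_update_update (fun j x => b j * x ^ (-r)) δs hkl,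
      costShift_rpow_neg hkt hr, costShift_rpow_neg hlt hr, hbudget]
    ring
  have hobj := hopt δ hδfeas hδbudget
  rw [Finset.sum_apply_update_update (fun j x => a j * x) δs hkl] at hobj
  simp only [costShift_zero (hpos _).le hr]
  linarith

theorem optimal_interior_balance (hr : r ≠ 0) (hI : I ⊆ Set.Ioi 0) (hfeas : ∀ j, δs j ∈ I)
    (hbudget : ∑ j, b j * δs j ^ (-r) = B)
    (hopt : ∀ δ : ι → ℝ, (∀ j, δ j ∈ I) → ∑ j, b j * δ j ^ (-r) = B →
      ∑ j, a j * δs j ≤ ∑ j, a j * δ j)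
    (hk : I ∈ 𝓝 (δs k)) (hl : I ∈ 𝓝 (δs l)) :
    a l * b k * δs l ^ (r + 1) = a k * b l * δs k ^ (r + 1) := by
  rcases eq_or_ne k l with rfl | hkl
  · ring
  have hderiv := ((hasDerivAt_costShift (c := b l) (hI (hfeas k)) hr).const_mul (a k)).add
    ((hasDerivAt_costShift (c := -b k) (hI (hfeas l)) hr).const_mul (a l))
  have hzero := (isLocalMin_costExchange hr hI hfeas hbudget hopt hkl hk hl).hasDerivAt_eq_zero
    hderiv
  field_simp at hzero
  linarith

end exchange

theorem eq_rpow_one_div_mul_of_rpow_eq {p q c s : ℝ} (hp : 0 ≤ p) (hq : 0 ≤ q) (hc : 0 ≤ c)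
    (hs : s ≠ 0) (h : q ^ s = c * p ^ s) : q = c ^ (1 / s) * p := by
  rw [← Real.rpow_rpow_inv hq hs, h, Real.mul_rpow hc (Real.rpow_nonneg hp s),
    Real.rpow_rpow_inv hp hs, one_div]

theorem recursion_rule_optimal_schedule_general
    (N : ℕ) (δbar m M r : ℝ)
    (hr : 0 < r)
    (a b : Fin N → ℝ) (ha : ∀ k, 0 < a k) (hb : ∀ k, 0 < b k)
    (δs : Fin N → ℝ)
    (hfeas : ∀ k, m * δbar ≤ δs k ∧ δs k ≤ M * δbar ∧ 0 < δs k)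
    (hbudget : ∑ k, b k * δs k ^ (-r) = (∑ k, b k) * δbar ^ (-r))
    (hopt : ∀ δ : Fin N → ℝ,
      (∀ k, m * δbar ≤ δ k ∧ δ k ≤ M * δbar ∧ 0 < δ k) →
      (∑ k, b k * δ k ^ (-r) = (∑ k, b k) * δbar ^ (-r)) →
      ∑ k, a k * δs k ≤ ∑ k, a k * δ k)
    (k khat : Fin N)
    (hk : δs k ∈ Set.Ioo (m * δbar) (M * δbar))
    (hkhat : δs khat ∈ Set.Ioo (m * δbar) (M * δbar)) :
    δs khat = ((b khat * a k) / (a khat * b k)) ^ (1 / (r + 1)) * δs k := by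
  set I : Set ℝ := {x | m * δbar ≤ x ∧ x ≤ M * δbar ∧ 0 < x}
  have hI_nhds (j : Fin N) (hj : δs j ∈ Set.Ioo (m * δbar) (M * δbar)) : I ∈ 𝓝 (δs j) :=
    mem_of_superset (inter_mem (isOpen_Ioo.mem_nhds hj) (isOpen_Ioi.mem_nhds (hfeas j).2.2))
      fun x ⟨⟨h₁, h₂⟩, h₃⟩ => ⟨h₁.le, h₂.le, h₃⟩
  have hbalance := optimal_interior_balance hr.ne' (fun x hx => hx.2.2) hfeas hbudget hopt
    (hI_nhds k hk) (hI_nhds khat hkhat)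
  have hden : 0 < a khat * b k := mul_pos (ha khat) (hb k)
  refine eq_rpow_one_div_mul_of_rpow_eq (hfeas k).2.2.le (hfeas khat).2.2.le
    (div_pos (mul_pos (hb khat) (ha k)) hden).le (by positivity) ?_
  rw [div_mul_eq_mul_div, eq_div_iff hden.ne']
  linarith

/-- Recursion rule between interior entries of an optimal inexactness
schedule (equation (3.15)). -/
theorem recursion_rule_optimal_schedule
    (N : ℕ) (δbar m M r : ℝ)
    (hδbar : 0 < δbar) (hm : 0 ≤ m) (hm1 : m < 1) (hM : 1 < M) (hr : 0 < r)
    (a b : Fin N → ℝ) (ha : ∀ k, 0 < a k) (hb : ∀ k, 0 < b k)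
    (δs : Fin N → ℝ)
    (hfeas : ∀ k, m * δbar ≤ δs k ∧ δs k ≤ M * δbar ∧ 0 < δs k)
    (hbudget : ∑ k, b k * δs k ^ (-r) = (∑ k, b k) * δbar ^ (-r))
    (hopt : ∀ δ : Fin N → ℝ,
      (∀ k, m * δbar ≤ δ k ∧ δ k ≤ M * δbar ∧ 0 < δ k) →
      (∑ k, b k * δ k ^ (-r) = (∑ k, b k) * δbar ^ (-r)) →
      ∑ k, a k * δs k ≤ ∑ k, a k * δ k)
    (k khat : Fin N)
    (hk : δs k ∈ Set.Ioo (m * δbar) (M * δbar))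
    (hkhat : δs khat ∈ Set.Ioo (m * δbar) (M * δbar)) :
    δs khat = ((b khat * a k) / (a khat * b k)) ^ (1 / (r + 1)) * δs k :=
  recursion_rule_optimal_schedule_general N δbar m M r hr a b ha hb δs hfeas hbudget hopt k khat hk
    hkhat
end
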